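/- arXiv:2007.11525 — 3 statements merged into one kernel-verified Lean document; each statement's English description precedes it below -/
import Mathlib

section
/- Defeaturing error identity (negative feature): let Ω = Ω₀ ∖ F̄ with F a negative feature, u the weak solution of −Δu = f in Ω with u = h on Γ_D and ∂u/∂n = g on Γ_N ⊃ γ, and u₀ the weak solution of the defeatured problem on Ω₀ (same data, with Neumann datum g₀ on γ₀ = ∂F ∖ γ̄). Then e := u − u₀|_Ω ∈ H¹_{0,Γ_D}(Ω) satisfies, for all v ∈ H¹_{0,Γ_D}(Ω), ∫_Ω ∇e·∇v dx = ∫_γ d_γ v ds, where d_γ = g + ∂u₀/∂n_F on γ. -/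
open MeasureTheory Set
open scoped RealInnerProductSpace

section IntegralLemmas

variable {α E : Type*} [MeasurableSpace α] {μ : Measure α}
  [NormedAddCommGroup E] [InnerProductSpace ℝ E]

theorem integral_inner_sub_left {f g h : α → E}
    (hf : Integrable (fun x => ⟪f x, h x⟫) μ) (hg : Integrable (fun x => ⟪g x, h x⟫) μ) :
    ∫ x, ⟪f x - g x, h x⟫ ∂μ = ∫ x, ⟪f x, h x⟫ ∂μ - ∫ x, ⟪g x, h x⟫ ∂μ := by
  simp_rw [inner_sub_left]
  exact integral_sub hf hg

theorem integral_add_mul {f g h : α → ℝ}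
    (hf : Integrable (fun x => f x * h x) μ) (hg : Integrable (fun x => g x * h x) μ) :
    ∫ x, (f x + g x) * h x ∂μ = ∫ x, f x * h x ∂μ + ∫ x, g x * h x ∂μ := by
  simp_rw [add_mul]
  exact integral_add hf hg

end IntegralLemmas

theorem defeaturing_error_identity_general
    (n : ℕ)
    (Ω ΓN γ : Set (EuclideanSpace ℝ (Fin n)))
    (μ ν : Measure (EuclideanSpace ℝ (Fin n)))
    (f g : EuclideanSpace ℝ (Fin n) → ℝ)
    (nF : EuclideanSpace ℝ (Fin n) → EuclideanSpace ℝ (Fin n))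
    (u u₀ : EuclideanSpace ℝ (Fin n) → ℝ)
    (T : (EuclideanSpace ℝ (Fin n) → ℝ) → Prop)  -- test space H¹_{0,Γ_D}(Ω)
    -- integrability of the various terms
    (hint : ∀ v, T v →
      Integrable (fun x => ⟪gradient u x, gradient v x⟫) (μ.restrict Ω) ∧
      Integrable (fun x => ⟪gradient u₀ x, gradient v x⟫) (μ.restrict Ω) ∧
      Integrable (fun x => g x * v x) (ν.restrict γ) ∧
      Integrable (fun x => ⟪gradient u₀ x, nF x⟫ * v x) (ν.restrict γ))
    -- weak form of the exact problem on Ω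
    (hu : ∀ v, T v →
      ∫ x in Ω, ⟪gradient u x, gradient v x⟫ ∂μ
        = ∫ x in Ω, f x * v x ∂μ + ∫ x in ΓN, g x * v x ∂ν)
    -- weak form of the defeatured problem restricted to Ω (natural Neumann datum on γ)
    (hu₀ : ∀ v, T v →
      ∫ x in Ω, ⟪gradient u₀ x, gradient v x⟫ ∂μ
        = ∫ x in Ω, f x * v x ∂μ + ∫ x in ΓN \ γ, g x * v x ∂ν
          - ∫ x in γ, ⟪gradient u₀ x, nF x⟫ * v x ∂ν)
    -- additivity of the boundary integral over Γ_N = (Γ_N ∖ γ) ∪ γ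
    (hsplit : ∀ v, T v →
      ∫ x in ΓN, g x * v x ∂ν
        = ∫ x in ΓN \ γ, g x * v x ∂ν + ∫ x in γ, g x * v x ∂ν) :
    ∀ v, T v →
      ∫ x in Ω, ⟪gradient u x - gradient u₀ x, gradient v x⟫ ∂μ
        = ∫ x in γ, (g x + ⟪gradient u₀ x, nF x⟫) * v x ∂ν := by
  intro v hv
  obtain ⟨hu_int, hu₀_int, hg_int, hflux_int⟩ := hint v hv
  rw [integral_inner_sub_left hu_int hu₀_int, integral_add_mul hg_int hflux_int,
    hu v hv, hu₀ v hv, hsplit v hv]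
  ring

/-- Defeaturing error identity (negative feature): if `u` is the weak solution of the exact
problem on `Ω` (volume measure `μ`, boundary measure `ν`, Neumann datum `g` on `Γ_N ⊇ γ`) and
`u₀` the defeatured solution, whose restriction to `Ω` satisfies the weak form with Neumann
datum `−∂u₀/∂n_F` on `γ`, then the error `e = u − u₀|_Ω` satisfies, for all test functions
`v ∈ H¹_{0,Γ_D}(Ω)` (membership modeled by the predicate `T`),
`∫_Ω ∇e·∇v = ∫_γ d_γ v` with `d_γ = g + ∂u₀/∂n_F`. -/
theorem defeaturing_error_identity
    (n : ℕ)
    (Ω ΓN γ : Set (EuclideanSpace ℝ (Fin n))) (hγΓN : γ ⊆ ΓN)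
    (μ ν : Measure (EuclideanSpace ℝ (Fin n)))
    (f g : EuclideanSpace ℝ (Fin n) → ℝ)
    (nF : EuclideanSpace ℝ (Fin n) → EuclideanSpace ℝ (Fin n))
    (u u₀ : EuclideanSpace ℝ (Fin n) → ℝ)
    (T : (EuclideanSpace ℝ (Fin n) → ℝ) → Prop)  -- test space H¹_{0,Γ_D}(Ω)
    -- integrability of the various terms
    (hint : ∀ v, T v →
      Integrable (fun x => ⟪gradient u x, gradient v x⟫) (μ.restrict Ω) ∧
      Integrable (fun x => ⟪gradient u₀ x, gradient v x⟫) (μ.restrict Ω) ∧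
      Integrable (fun x => g x * v x) (ν.restrict γ) ∧
      Integrable (fun x => ⟪gradient u₀ x, nF x⟫ * v x) (ν.restrict γ))
    -- weak form of the exact problem on Ω
    (hu : ∀ v, T v →
      ∫ x in Ω, ⟪gradient u x, gradient v x⟫ ∂μ
        = ∫ x in Ω, f x * v x ∂μ + ∫ x in ΓN, g x * v x ∂ν)
    -- weak form of the defeatured problem restricted to Ω (natural Neumann datum on γ)
    (hu₀ : ∀ v, T v →
      ∫ x in Ω, ⟪gradient u₀ x, gradient v x⟫ ∂μ
        = ∫ x in Ω, f x * v x ∂μ + ∫ x in ΓN \ γ, g x * v x ∂ν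
          - ∫ x in γ, ⟪gradient u₀ x, nF x⟫ * v x ∂ν)
    -- additivity of the boundary integral over Γ_N = (Γ_N ∖ γ) ∪ γ
    (hsplit : ∀ v, T v →
      ∫ x in ΓN, g x * v x ∂ν
        = ∫ x in ΓN \ γ, g x * v x ∂ν + ∫ x in γ, g x * v x ∂ν) :
    ∀ v, T v →
      ∫ x in Ω, ⟪gradient u x - gradient u₀ x, gradient v x⟫ ∂μ
        = ∫ x in γ, (g x + ⟪gradient u₀ x, nF x⟫) * v x ∂ν :=
  defeaturing_error_identity_general n Ω ΓN γ μ ν f g nF u u₀ T hint hu hu₀ hsplit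
end

section
/- Reliability of the defeaturing estimator (negative feature): under the setting of the defeaturing error identity, if γ is isotropic, then |u − u₀|_Ω|_{H¹(Ω)} ≲ E_n(u₀), where E_n(u₀)² = |γ|^{1/(n−1)} ‖d_γ − d̄_γ‖²_{L²(γ)} + c_γ² |γ|^{n/(n−1)} |d̄_γ|², d̄_γ denotes the mean of d_γ over γ, and c_γ = max(|log|γ||, η)^{1/2} for n = 2, c_γ = 1 for n = 3. -/
open MeasureTheory Set

/-!
Test the error representation with `e` itself. Since `d - d̄` has mean zero on `γ`,
`|e|²_{H¹} = ∫_γ (d - d̄)(e - ē) + d̄ ∫_γ e`; Cauchy–Schwarz bounds the first term by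
`‖d - d̄‖ ‖e - ē‖` and the second by `|d̄| |γ|^{1/2} ‖e‖`, to which the fractional Poincaré
and trace estimates apply. Both sides are then linear in `|e|_{H¹}`, so dividing by it and
using `x + y ≤ √2 (x² + y²)^{1/2}` yields the estimator.
-/

section

variable {X : Type*} [MeasurableSpace X] {μ : Measure X} {f g : X → ℝ}

lemma abs_integral_mul_le_sqrt_integral_sq_mul (hf : MemLp f 2 μ) (hg : MemLp g 2 μ) :
    |∫ x, f x * g x ∂μ| ≤ √(∫ x, f x ^ 2 ∂μ) * √(∫ x, g x ^ 2 ∂μ) := by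
  have hf' : MemLp f (ENNReal.ofReal 2) μ := by simpa using hf
  have hg' : MemLp g (ENNReal.ofReal 2) μ := by simpa using hg
  have hnorm_sq (h : X → ℝ) : ∫ x, ‖h x‖ ^ (2 : ℝ) ∂μ = ∫ x, h x ^ 2 ∂μ := by
    simp only [Real.rpow_two, Real.norm_eq_abs, sq_abs]
  calc |∫ x, f x * g x ∂μ| ≤ ∫ x, ‖f x‖ * ‖g x‖ ∂μ := by
        simpa only [norm_mul, Real.norm_eq_abs] using
          norm_integral_le_integral_norm (fun x => f x * g x)
    _ ≤ (∫ x, ‖f x‖ ^ (2 : ℝ) ∂μ) ^ (1 / 2 : ℝ) * (∫ x, ‖g x‖ ^ (2 : ℝ) ∂μ) ^ (1 / 2 : ℝ) :=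
        integral_mul_norm_le_Lp_mul_Lq Real.HolderConjugate.two_two hf' hg'
    _ = √(∫ x, f x ^ 2 ∂μ) * √(∫ x, g x ^ 2 ∂μ) := by
        rw [hnorm_sq, hnorm_sq, Real.sqrt_eq_rpow, Real.sqrt_eq_rpow]

variable [IsFiniteMeasure μ]

lemma integral_mul_eq_integral_sub_average_mul_add (hf : MemLp f 2 μ) (hg : MemLp g 2 μ)
    (c : ℝ) :
    ∫ x, f x * g x ∂μ
      = ∫ x, (f x - ⨍ y, f y ∂μ) * (g x - c) ∂μ + (⨍ y, f y ∂μ) * ∫ x, g x ∂μ := by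
  set f₀ := ⨍ y, f y ∂μ
  have hfg : Integrable (fun x => f x * g x) μ := hf.integrable_mul hg
  have hg₁ : Integrable g μ := hg.integrable one_le_two
  have hf₁ : Integrable (fun x => f x - f₀) μ :=
    (hf.integrable one_le_two).sub (integrable_const _)
  have hexpand : (fun x => (f x - f₀) * (g x - c))
      = fun x => (f x * g x - f₀ * g x) - c * (f x - f₀) := by
    ext x; ring
  have hfg₀ : Integrable (fun x => f x * g x - f₀ * g x) μ := hfg.sub (hg₁.const_mul _)
  rw [hexpand, integral_sub hfg₀ (hf₁.const_mul _), integral_sub hfg (hg₁.const_mul _),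
    integral_const_mul, integral_const_mul,
    integral_sub_average, mul_zero]
  ring

lemma integral_mul_le_sqrt_integral_sub_average_sq_mul_add (hf : MemLp f 2 μ)
    (hg : MemLp g 2 μ) :
    ∫ x, f x * g x ∂μ
      ≤ √(∫ x, (f x - ⨍ y, f y ∂μ) ^ 2 ∂μ) * √(∫ x, (g x - ⨍ y, g y ∂μ) ^ 2 ∂μ)
        + |⨍ y, f y ∂μ| * √(μ.real univ) * √(∫ x, g x ^ 2 ∂μ) := by
  have hcentered := abs_integral_mul_le_sqrt_integral_sq_mul
    (hf.sub (memLp_const (⨍ y, f y ∂μ))) (hg.sub (memLp_const (⨍ y, g y ∂μ)))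
  have hmean : |∫ x, 1 * g x ∂μ| ≤ √(∫ x, (1 : ℝ) ^ 2 ∂μ) * √(∫ x, g x ^ 2 ∂μ) :=
    abs_integral_mul_le_sqrt_integral_sq_mul (memLp_const 1) hg
  simp only [one_mul, one_pow, integral_const, smul_eq_mul, mul_one] at hmean
  rw [integral_mul_eq_integral_sub_average_mul_add hf hg (⨍ y, g y ∂μ), mul_assoc]
  calc _ ≤ |∫ x, (f x - ⨍ y, f y ∂μ) * (g x - ⨍ y, g y ∂μ) ∂μ|
        + |⨍ y, f y ∂μ| * |∫ x, g x ∂μ| := by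
        rw [← abs_mul]; exact add_le_add (le_abs_self _) (le_abs_self _)
    _ ≤ _ := add_le_add hcentered (by gcongr)

end

lemma le_of_sq_le_mul {x K : ℝ} (hK : 0 ≤ K) (h : x ^ 2 ≤ K * x) : x ≤ K := by
  rcases le_or_gt x 0 with hx | hx
  · exact hx.trans hK
  · nlinarith

lemma mul_add_mul_le_sqrt_two_mul_max_mul {a b s t : ℝ} (ha : 0 ≤ a) (hb : 0 ≤ b)
    (hst : 0 ≤ max s t) : s * a + t * b ≤ √2 * max s t * √(a ^ 2 + b ^ 2) := by
  have hsum : a + b ≤ √2 * √(a ^ 2 + b ^ 2) := by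
    rw [← Real.sqrt_mul zero_le_two]
    exact Real.le_sqrt_of_sq_le add_sq_le
  calc s * a + t * b ≤ max s t * a + max s t * b := by gcongr <;> simp
    _ = max s t * (a + b) := by ring
    _ ≤ max s t * (√2 * √(a ^ 2 + b ^ 2)) := by gcongr
    _ = _ := by ring

lemma sq_rpow_one_div_two_mul {m : ℝ} (hm : 0 ≤ m) (x : ℝ) :
    (m ^ (1 / (2 * x))) ^ 2 = m ^ (1 / x) := by
  rw [← Real.rpow_natCast, ← Real.rpow_mul hm]
  congr 1
  push_cast
  ring

lemma rpow_one_div_sub_one_mul_self {m : ℝ} (hm : 0 < m) {p : ℝ} (hp : p - 1 ≠ 0) :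
    m ^ (1 / (p - 1)) * m = m ^ (p / (p - 1)) := by
  conv_rhs => rw [show p / (p - 1) = 1 / (p - 1) + 1 by field_simp; ring]
  rw [Real.rpow_add hm, Real.rpow_one]

lemma inv_toReal_mul_setIntegral_eq_setAverage {X : Type*} [MeasurableSpace X] (ν : Measure X)
    (γ : Set X) (f : X → ℝ) :
    (ν γ).toReal⁻¹ * ∫ y in γ, f y ∂ν = ⨍ y in γ, f y ∂ν := by
  rw [setAverage_eq, smul_eq_mul, measureReal_def]

theorem defeaturing_reliability_general
    (n : ℕ) (hn : 2 ≤ n)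
    {X : Type*} [MeasurableSpace X] (ν : Measure X)
    (γ : Set X) (hγpos : 0 < (ν γ).toReal)
    (η : ℝ)
    (d e : X → ℝ)
    (hd : MemLp d 2 (ν.restrict γ)) (he : MemLp e 2 (ν.restrict γ))
    (eH1 eHalfBd : ℝ)
    (C2 C3 C4 : ℝ) (hC2 : 0 < C2) (hC3 : 0 < C3) (hC4 : 0 < C4)
    (cγ : ℝ)
    (hcγ : cγ = if n = 2 then Real.sqrt (max |Real.log ((ν γ).toReal)| η) else 1)
    -- (i) error representation, tested with v = e
    (hrep : eH1 ^ 2 = ∫ x in γ, d x * e x ∂ν)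
    -- (ii) fractional Poincaré inequality on γ combined with the trace to ∂Ω
    (hPoin : Real.sqrt (∫ x in γ, (e x - (ν γ).toReal⁻¹ * ∫ y in γ, e y ∂ν) ^ 2 ∂ν)
      ≤ C2 * (ν γ).toReal ^ ((1 : ℝ) / (2 * ((n : ℝ) - 1))) * eHalfBd)
    -- (iii) boundary L² estimate ‖e‖_{L²(γ)} ≲ c_γ |γ|^{1/(2(n−1))} ‖e‖_{H^{1/2}(∂Ω)}
    (hTr : Real.sqrt (∫ x in γ, (e x) ^ 2 ∂ν)
      ≤ C3 * cγ * (ν γ).toReal ^ ((1 : ℝ) / (2 * ((n : ℝ) - 1))) * eHalfBd)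
    -- (iv) trace inequality ‖e‖_{H^{1/2}(∂Ω)} ≲ |e|_{H¹(Ω)}
    (hH1 : eHalfBd ≤ C4 * eH1) :
    eH1 ≤ Real.sqrt 2 * max (C2 * C4) (C3 * C4) *
      Real.sqrt ((ν γ).toReal ^ ((1 : ℝ) / ((n : ℝ) - 1)) *
          (∫ x in γ, (d x - (ν γ).toReal⁻¹ * ∫ y in γ, d y ∂ν) ^ 2 ∂ν)
        + cγ ^ 2 * (ν γ).toReal ^ ((n : ℝ) / ((n : ℝ) - 1)) *
          ((ν γ).toReal⁻¹ * ∫ y in γ, d y ∂ν) ^ 2) := by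
  have : IsFiniteMeasure (ν.restrict γ) :=
    isFiniteMeasure_restrict.2 (ENNReal.toReal_pos_iff.1 hγpos).2.ne
  have hγreal : (ν.restrict γ).real univ = (ν γ).toReal := by
    rw [measureReal_restrict_apply_univ, measureReal_def]
  have hcγ_nonneg : 0 ≤ cγ := by rw [hcγ]; split_ifs <;> positivity
  simp only [inv_toReal_mul_setIntegral_eq_setAverage] at hPoin ⊢
  set m := (ν γ).toReal
  set α : ℝ := 1 / (2 * ((n : ℝ) - 1))
  set dmean := ⨍ y in γ, d y ∂ν
  set a := m ^ α * √(∫ x in γ, (d x - dmean) ^ 2 ∂ν)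
  set b := cγ * m ^ α * √m * |dmean|
  have henergy : eH1 ^ 2 ≤ (C2 * C4 * a + C3 * C4 * b) * eH1 :=
    calc eH1 ^ 2 ≤ √(∫ x in γ, (d x - dmean) ^ 2 ∂ν) * (C2 * m ^ α * eHalfBd)
          + |dmean| * √m * (C3 * cγ * m ^ α * eHalfBd) := by
          rw [hrep]
          refine (integral_mul_le_sqrt_integral_sub_average_sq_mul_add hd he).trans ?_
          rw [hγreal]
          gcongr
      _ ≤ √(∫ x in γ, (d x - dmean) ^ 2 ∂ν) * (C2 * m ^ α * (C4 * eH1))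
          + |dmean| * √m * (C3 * cγ * m ^ α * (C4 * eH1)) := by gcongr
      _ = (C2 * C4 * a + C3 * C4 * b) * eH1 := by ring
  have hn1 : (n : ℝ) - 1 ≠ 0 := by
    have : (2 : ℝ) ≤ n := by exact_mod_cast hn
    linarith
  calc eH1 ≤ C2 * C4 * a + C3 * C4 * b := le_of_sq_le_mul (by positivity) henergy
    _ ≤ √2 * max (C2 * C4) (C3 * C4) * √(a ^ 2 + b ^ 2) :=
        mul_add_mul_le_sqrt_two_mul_max_mul (by positivity) (by positivity)
          (le_max_of_le_left (by positivity))
    _ = _ := by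
        rw [mul_pow, mul_pow, mul_pow, mul_pow, Real.sq_sqrt (by positivity),
          Real.sq_sqrt hγpos.le, sq_abs, sq_rpow_one_div_two_mul hγpos.le,
          ← rpow_one_div_sub_one_mul_self hγpos hn1]
        congr 2
        ring

/-- Reliability of the defeaturing estimator (negative feature): under the error representation
tested with `e` itself, the fractional Poincaré inequality on `γ`, the boundary `L²` trace
estimate with constant `c_γ`, and the trace inequality `‖e‖_{H^{1/2}(∂Ω)} ≲ |e|_{H¹(Ω)}`,
the defeaturing error satisfies `|e|_{H¹(Ω)} ≲ E_n(u₀)`, where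
`E_n(u₀)² = |γ|^{1/(n−1)} ‖d_γ − d̄_γ‖²_{L²(γ)} + c_γ² |γ|^{n/(n−1)} |d̄_γ|²` and
`c_γ = max(|log|γ||, η)^{1/2}` if `n = 2`, `c_γ = 1` if `n = 3`. -/
theorem defeaturing_reliability
    (n : ℕ) (hn : 2 ≤ n)
    {X : Type*} [MeasurableSpace X] (ν : Measure X)
    (γ : Set X) (hγfin : ν γ ≠ ⊤) (hγpos : 0 < (ν γ).toReal)
    (η : ℝ) (hη : 0 < η) (hηeq : η = -Real.log η)
    (d e : X → ℝ)
    (hd : MemLp d 2 (ν.restrict γ)) (he : MemLp e 2 (ν.restrict γ))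
    (eH1 eHalfBd : ℝ) (heH1 : 0 ≤ eH1) (heHalfBd : 0 ≤ eHalfBd)
    (C2 C3 C4 : ℝ) (hC2 : 0 < C2) (hC3 : 0 < C3) (hC4 : 0 < C4)
    (cγ : ℝ)
    (hcγ : cγ = if n = 2 then Real.sqrt (max |Real.log ((ν γ).toReal)| η) else 1)
    -- (i) error representation, tested with v = e
    (hrep : eH1 ^ 2 = ∫ x in γ, d x * e x ∂ν)
    -- (ii) fractional Poincaré inequality on γ combined with the trace to ∂Ω
    (hPoin : Real.sqrt (∫ x in γ, (e x - (ν γ).toReal⁻¹ * ∫ y in γ, e y ∂ν) ^ 2 ∂ν)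
      ≤ C2 * (ν γ).toReal ^ ((1 : ℝ) / (2 * ((n : ℝ) - 1))) * eHalfBd)
    -- (iii) boundary L² estimate ‖e‖_{L²(γ)} ≲ c_γ |γ|^{1/(2(n−1))} ‖e‖_{H^{1/2}(∂Ω)}
    (hTr : Real.sqrt (∫ x in γ, (e x) ^ 2 ∂ν)
      ≤ C3 * cγ * (ν γ).toReal ^ ((1 : ℝ) / (2 * ((n : ℝ) - 1))) * eHalfBd)
    -- (iv) trace inequality ‖e‖_{H^{1/2}(∂Ω)} ≲ |e|_{H¹(Ω)}
    (hH1 : eHalfBd ≤ C4 * eH1) :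
    eH1 ≤ Real.sqrt 2 * max (C2 * C4) (C3 * C4) *
      Real.sqrt ((ν γ).toReal ^ ((1 : ℝ) / ((n : ℝ) - 1)) *
          (∫ x in γ, (d x - (ν γ).toReal⁻¹ * ∫ y in γ, d y ∂ν) ^ 2 ∂ν)
        + cγ ^ 2 * (ν γ).toReal ^ ((n : ℝ) / ((n : ℝ) - 1)) *
          ((ν γ).toReal⁻¹ * ∫ y in γ, d y ∂ν) ^ 2) :=
  defeaturing_reliability_general n hn ν γ hγpos η d e hd he eH1 eHalfBd C2 C3 C4 hC2 hC3 hC4 cγ hcγ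
    hrep hPoin hTr hH1
end

section
/- Dual-norm bound for the defeaturing residual: under the error representation ∫_Ω ∇e·∇v = ∫_γ d_γ v for all v ∈ H¹_{0,Γ_D}(Ω), and assuming that for every w ∈ H^{1/2}_{00}(γ) the harmonic extension u_w ∈ H¹(Ω) with boundary values w* (zero-extension of w) satisfies |u_w|_{H¹(Ω)} ≲ ‖w‖_{H^{1/2}_{00}(γ)}, one has ‖d_γ‖_{H^{−1/2}_{00}(γ)} ≲ |e|_{H¹(Ω)}. -/
open MeasureTheory

theorem residual_dual_norm_bound_general
    {X : Type*} [MeasurableSpace X] (ν : Measure X)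
    (γ : Set X)
    (d : X → ℝ)
    (T : (X → ℝ) → Prop)                -- test space H¹_{0,Γ_D}(Ω)
    (H1semi : (X → ℝ) → ℝ)              -- H¹(Ω) seminorm
    (H00 : (X → ℝ) → ℝ)                 -- H^{1/2}_{00}(γ) norm
    (eH1 : ℝ) (heH1 : 0 ≤ eH1)          -- |e|_{H¹(Ω)}
    (Cext : ℝ)
    -- error representation with Cauchy–Schwarz: ∫_γ d v = ∫_Ω ∇e·∇v ≤ |e|₁ |v|₁
    (hrep : ∀ v, T v → ∫ x in γ, d x * v x ∂ν ≤ eH1 * H1semi v)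
    -- harmonic extension with continuous dependence on the data
    (hext : ∀ w : X → ℝ, ∃ uw, T uw ∧ (∀ x ∈ γ, uw x = w x) ∧
      H1semi uw ≤ Cext * H00 w)
    -- the pairing only sees the values on γ
    (hpair : ∀ w uw : X → ℝ, (∀ x ∈ γ, uw x = w x) →
      ∫ x in γ, d x * w x ∂ν = ∫ x in γ, d x * uw x ∂ν) :
    ∀ w : X → ℝ, ∫ x in γ, d x * w x ∂ν ≤ Cext * eH1 * H00 w := by
  intro w
  obtain ⟨uw, huw_test, huw_eq_on, huw_bound⟩ := hext w
  calc ∫ x in γ, d x * w x ∂ν = ∫ x in γ, d x * uw x ∂ν := hpair w uw huw_eq_on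
    _ ≤ eH1 * H1semi uw := hrep uw huw_test
    _ ≤ eH1 * (Cext * H00 w) := mul_le_mul_of_nonneg_left huw_bound heH1
    _ = Cext * eH1 * H00 w := by ring

/-- Dual-norm bound for the defeaturing residual: under the (Cauchy–Schwarz'd) error
representation `∫_γ d_γ v ≤ |e|_{H¹(Ω)} |v|_{H¹(Ω)}` for all test functions `v ∈ H¹_{0,Γ_D}(Ω)`
(predicate `T`), and assuming that every `w ∈ H^{1/2}_{00}(γ)` admits a (harmonic) extension
`u_w` in the test space agreeing with `w` on `γ` and satisfying
`|u_w|_{H¹(Ω)} ≲ ‖w‖_{H^{1/2}_{00}(γ)}`, one obtains the dual norm bound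
`‖d_γ‖_{H^{−1/2}_{00}(γ)} ≲ |e|_{H¹(Ω)}`, expressed through the duality pairing. -/
theorem residual_dual_norm_bound
    {X : Type*} [MeasurableSpace X] (ν : Measure X)
    (γ : Set X) (hγ : MeasurableSet γ)
    (d : X → ℝ)
    (T : (X → ℝ) → Prop)                -- test space H¹_{0,Γ_D}(Ω)
    (H1semi : (X → ℝ) → ℝ)              -- H¹(Ω) seminorm
    (H00 : (X → ℝ) → ℝ)                 -- H^{1/2}_{00}(γ) norm
    (hH00 : ∀ w, 0 ≤ H00 w)
    (eH1 : ℝ) (heH1 : 0 ≤ eH1)          -- |e|_{H¹(Ω)}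
    (Cext : ℝ) (hCext : 0 < Cext)
    -- error representation with Cauchy–Schwarz: ∫_γ d v = ∫_Ω ∇e·∇v ≤ |e|₁ |v|₁
    (hrep : ∀ v, T v → ∫ x in γ, d x * v x ∂ν ≤ eH1 * H1semi v)
    -- harmonic extension with continuous dependence on the data
    (hext : ∀ w : X → ℝ, ∃ uw, T uw ∧ (∀ x ∈ γ, uw x = w x) ∧
      H1semi uw ≤ Cext * H00 w)
    -- the pairing only sees the values on γ
    (hpair : ∀ w uw : X → ℝ, (∀ x ∈ γ, uw x = w x) →
      ∫ x in γ, d x * w x ∂ν = ∫ x in γ, d x * uw x ∂ν) :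
    ∀ w : X → ℝ, ∫ x in γ, d x * w x ∂ν ≤ Cext * eH1 * H00 w :=
  residual_dual_norm_bound_general ν γ d T H1semi H00 eH1 heH1 Cext hrep hext hpair
end
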